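/- For all real x and all integers n ≥ 1, B_{2n+1}(x) − (18x² − 1)·B_{2n−1}(x) = C_{2n}(x) + C_{2(n−1)}(x). -/

import Mathlib

def B (x : ℝ) : ℕ → ℝ
  | 0 => 0
  | 1 => 1
  | n + 2 => 6 * x * B x (n + 1) - B x n

def C (x : ℝ) : ℕ → ℝ
  | 0 => 1
  | 1 => 3 * x
  | n + 2 => 6 * x * C x (n + 1) - C x n

/-! Parity plays no role: for every `m`, both `B_{m+3} − (18x² − 1) B_{m+1}` and `C_{m+2} + C_m`
reduce to `18x² B_{m+1} − 6x B_m` by the common recurrence, once the Lucas-balancing polynomials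
are written as `C_n = B_{n+1} − 3x B_n`. -/

lemma B_add_two (x : ℝ) (n : ℕ) : B x (n + 2) = 6 * x * B x (n + 1) - B x n := rfl

lemma C_add_two (x : ℝ) (n : ℕ) : C x (n + 2) = 6 * x * C x (n + 1) - C x n := rfl

lemma C_eq_B_add_one_sub (x : ℝ) (n : ℕ) : C x n = B x (n + 1) - 3 * x * B x n := by
  induction n using Nat.twoStepInduction with
  | zero => simp [B, C]
  | one => simp [B, C]; ring
  | more n ih₀ ih₁ =>
    rw [C_add_two, ih₀, ih₁]
    linear_combination 3 * x * B_add_two x n - B_add_two x (n + 1)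

lemma B_add_three_sub_mul_B_add_one (x : ℝ) (m : ℕ) :
    B x (m + 3) - (18 * x ^ 2 - 1) * B x (m + 1) = C x (m + 2) + C x m := by
  rw [C_eq_B_add_one_sub, C_eq_B_add_one_sub]
  linear_combination 3 * x * B_add_two x m

theorem stmt3 (x : ℝ) (n : ℕ) (hn : 1 ≤ n) :
    B x (2 * n + 1) - (18 * x ^ 2 - 1) * B x (2 * n - 1) = C x (2 * n) + C x (2 * (n - 1)) := by
  obtain ⟨k, rfl⟩ := Nat.exists_eq_add_of_le' hn
  have h := B_add_three_sub_mul_B_add_one x (2 * k)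
  rwa [show 2 * (k + 1) + 1 = 2 * k + 3 by ring, show 2 * (k + 1) - 1 = 2 * k + 1 by omega,
    show 2 * (k + 1) = 2 * k + 2 by ring, show k + 1 - 1 = k by omega]
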